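/- arXiv:1001.5338 — 7 statements merged into one kernel-verified Lean document; each statement's English description precedes it below -/
import Mathlib

section
/- Let R be a finite commutative ring with nonzero unity and let x ∈ R be a vertex of the total graph T(Γ(R)). Then the degree of x in T(Γ(R)) is either |Z(R)| or |Z(R)| − 1. -/
open SimpleGraph

/-- The total graph of a commutative ring `R`: vertices are elements of `R`,
and distinct `x, y` are adjacent iff `x + y` is a zero-divisor. -/
def totalGraph (R : Type*) [CommRing R] : SimpleGraph R where
  Adj x y := x ≠ y ∧ x + y ∉ nonZeroDivisors R
  symm := ⟨fun x y ⟨h1, h2⟩ => ⟨h1.symm, by rwa [add_comm]⟩⟩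
  loopless := ⟨fun x ⟨h, _⟩ => h rfl⟩

/-- The set of zero-divisors of `R` (including `0` when `R` is nontrivial). -/
def zeroDivisors (R : Type*) [CommRing R] : Set R := {x : R | x ∉ nonZeroDivisors R}

theorem degree_totalGraph_eq_or
    (R : Type*) [CommRing R] [Fintype R] [Nontrivial R] (x : R) :
    ((totalGraph R).neighborSet x).ncard = (zeroDivisors R).ncard ∨
    ((totalGraph R).neighborSet x).ncard = (zeroDivisors R).ncard - 1 := by
  set S : Set R := {y : R | x + y ∉ nonZeroDivisors R} with hS
  have hScard : S.ncard = (zeroDivisors R).ncard := by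
    have himg : (fun y : R => x + y) '' S = zeroDivisors R := by
      ext z
      constructor
      · rintro ⟨y, hy, rfl⟩; exact hy
      · intro hz
        exact ⟨z - x, by simpa [zeroDivisors, S] using hz, by ring⟩
    calc S.ncard = ((fun y : R => x + y) '' S).ncard :=
          (Set.ncard_image_of_injective S (add_right_injective x)).symm
      _ = (zeroDivisors R).ncard := by rw [himg]
  have hN : (totalGraph R).neighborSet x = S \ {x} := by
    ext y
    simp only [mem_neighborSet, totalGraph, Set.mem_diff, Set.mem_singleton_iff,
      Set.mem_setOf_eq, S]
    exact ⟨fun ⟨h1, h2⟩ => ⟨h2, fun h => h1 h.symm⟩, fun ⟨h2, h1⟩ => ⟨fun h => h1 h.symm, h2⟩⟩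
  by_cases hx : x ∈ S
  · right
    rw [hN, Set.ncard_diff_singleton_of_mem hx, hScard]
  · left
    rw [hN, Set.diff_singleton_eq_self hx, hScard]
end

section
/- Let R be a finite commutative ring with nonzero unity and let x ∈ R. If 2x ∈ Z(R), then the degree of x in the total graph T(Γ(R)) equals |Z(R)| − 1. -/
open SimpleGraph

theorem degree_totalGraph_of_two_mul_mem_zeroDivisors
    (R : Type*) [CommRing R] [Fintype R] [Nontrivial R] (x : R)
    (hx : 2 * x ∈ zeroDivisors R) :
    ((totalGraph R).neighborSet x).ncard = (zeroDivisors R).ncard - 1 := by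
  have himg : (fun y => x + y) '' ((totalGraph R).neighborSet x)
      = zeroDivisors R \ {2 * x} := by
    ext z
    constructor
    · rintro ⟨y, ⟨hne, hz⟩, rfl⟩
      refine ⟨hz, ?_⟩
      simp only [Set.mem_singleton_iff, two_mul]
      intro h
      exact hne (add_left_cancel h).symm
    · rintro ⟨hz, hne⟩
      refine ⟨z - x, ⟨?_, by simpa [zeroDivisors] using hz⟩, by ring⟩
      intro h
      apply hne
      rw [Set.mem_singleton_iff, two_mul]
      linear_combination -h
  have hinj : Function.Injective (fun y : R => x + y) := fun a b h => by
    simpa using add_left_cancel (h : x + a = x + b)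
  calc ((totalGraph R).neighborSet x).ncard
      = ((fun y => x + y) '' ((totalGraph R).neighborSet x)).ncard :=
        (Set.ncard_image_of_injective _ hinj).symm
    _ = (zeroDivisors R \ {2 * x}).ncard := by rw [himg]
    _ = (zeroDivisors R).ncard - 1 :=
        Set.ncard_diff_singleton_of_mem hx
end

section
/- Let R be a finite commutative ring with nonzero unity and let x ∈ R. If 2x ∉ Z(R), then the degree of x in the total graph T(Γ(R)) equals |Z(R)|. -/
open SimpleGraph

theorem degree_totalGraph_of_two_mul_not_mem_zeroDivisors
    (R : Type*) [CommRing R] [Fintype R] [Nontrivial R] (x : R)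
    (hx : 2 * x ∉ zeroDivisors R) :
    ((totalGraph R).neighborSet x).ncard = (zeroDivisors R).ncard := by
  have h : (fun y => x + y) '' ((totalGraph R).neighborSet x) = zeroDivisors R := by
    ext z
    constructor
    · rintro ⟨y, hy, rfl⟩
      exact hy.2
    · intro hz
      refine ⟨z - x, ⟨?_, ?_⟩, by ring⟩
      · intro hxz
        apply hx
        have : z = 2 * x := by linear_combination -hxz
        rw [zeroDivisors, Set.mem_setOf_eq]
        rw [this] at hz
        exact hz
      · have : x + (z - x) = z := by ring
        rw [this]
        exact hz
  rw [← h, Set.ncard_image_of_injective _ (add_right_injective x)]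
end

section
/- Let R be a finite commutative ring with nonzero unity such that 2 ∈ Z(R). Then the total graph T(Γ(R)) is a (|Z(R)| − 1)-regular graph, i.e., every vertex has degree |Z(R)| − 1. -/
open SimpleGraph

theorem totalGraph_regular_of_two_mem_zeroDivisors
    (R : Type*) [CommRing R] [Fintype R] [Nontrivial R]
    (h2 : (2 : R) ∈ zeroDivisors R) (x : R) :
    ((totalGraph R).neighborSet x).ncard = (zeroDivisors R).ncard - 1 := by
  have hset : (totalGraph R).neighborSet x
      = ((fun y => x + y) ⁻¹' zeroDivisors R) \ {x} := by
    ext y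
    simp only [mem_neighborSet, totalGraph, zeroDivisors, Set.mem_diff,
      Set.mem_preimage, Set.mem_setOf_eq, Set.mem_singleton_iff]
    exact ⟨fun ⟨h1, h3⟩ => ⟨h3, fun h => h1 h.symm⟩,
      fun ⟨h3, h1⟩ => ⟨fun h => h1 h.symm, h3⟩⟩
  obtain ⟨c, hc2, hc0⟩ : ∃ c : R, c * 2 = 0 ∧ c ≠ 0 := by
    have := h2
    simp only [zeroDivisors, Set.mem_setOf_eq, mem_nonZeroDivisors_iff] at this
    push_neg at this
    by_cases h : ∀ y : R, 2 * y = 0 → y = 0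
    · exact this h
    · push_neg at h
      obtain ⟨y, hy, hy0⟩ := h
      exact ⟨y, by rw [mul_comm]; exact hy, hy0⟩
  have hxmem : x ∈ (fun y => x + y) ⁻¹' zeroDivisors R := by
    simp only [Set.mem_preimage, zeroDivisors, Set.mem_setOf_eq, mem_nonZeroDivisors_iff]
    push_neg
    exact fun _ => ⟨c, by rw [← two_mul, ← mul_assoc, hc2, zero_mul], hc0⟩
  have hpre : (fun y => x + y) ⁻¹' zeroDivisors R
      = (Equiv.addLeft x).symm '' zeroDivisors R := by
    rw [Equiv.image_eq_preimage_symm]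
    rfl
  rw [hset, Set.ncard_diff_singleton_of_mem hxmem, hpre,
    Set.ncard_image_of_injective _ (Equiv.addLeft x).symm.injective]
end

section
/- Let F be a finite field. Then the total graph T(Γ(𝔽₂ × F)) of the product ring 𝔽₂ × F is isomorphic (as a simple graph) to the Cartesian (box) product K₂ □ K_F of the complete graph on 2 vertices with the complete graph on the vertex set F. -/
open SimpleGraph

lemma mem_nzd_prod {R S : Type*} [CommRing R] [CommRing S] (x : R × S) :
    x ∈ nonZeroDivisors (R × S) ↔ x.1 ∈ nonZeroDivisors R ∧ x.2 ∈ nonZeroDivisors S := by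
  constructor
  · intro h
    rw [mem_nonZeroDivisors_iff_right] at h
    constructor
    · rw [mem_nonZeroDivisors_iff_right]
      intro a ha
      have := h (a, 0) (by simp [Prod.ext_iff, ha])
      exact (Prod.ext_iff.1 this).1
    · rw [mem_nonZeroDivisors_iff_right]
      intro a ha
      have := h (0, a) (by simp [Prod.ext_iff, ha])
      exact (Prod.ext_iff.1 this).2
  · rintro ⟨h1, h2⟩
    rw [mem_nonZeroDivisors_iff_right] at h1 h2 ⊢
    intro y hy
    have := Prod.ext_iff.1 hy
    exact Prod.ext (h1 y.1 this.1) (h2 y.2 this.2)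

lemma zmod2_add_eq_zero : ∀ a b : ZMod 2, a + b = 0 ↔ a = b := by decide

theorem totalGraph_F2_prod_field_iso_boxProd
    (F : Type*) [Field F] [Fintype F] :
    Nonempty (totalGraph (ZMod 2 × F) ≃g
      ((⊤ : SimpleGraph (Fin 2)) □ (⊤ : SimpleGraph F))) := by
  classical
  let e : (ZMod 2 × F) ≃ (Fin 2 × F) :=
    { toFun := fun p => (p.1, if p.1 = 0 then p.2 else -p.2)
      invFun := fun p => ((p.1 : ZMod 2), if (p.1 : ZMod 2) = 0 then p.2 else -p.2)
      left_inv := fun p => by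
        obtain ⟨a, b⟩ := p
        by_cases h : a = 0 <;> simp [h]
        exact fun h' => absurd h' h
      right_inv := fun p => by
        obtain ⟨a, b⟩ := p
        by_cases h : (a : ZMod 2) = 0 <;> simp [h]
        · exact fun h' => absurd rfl h'
        · exact fun h' => absurd h' h }
  refine ⟨{ toEquiv := e, map_rel_iff' := ?_ }⟩
  rintro ⟨a, b⟩ ⟨c, d⟩
  simp only [e, Equiv.coe_fn_mk, boxProd_adj, top_adj, totalGraph, Prod.mk.injEq]
  have hnz : ((a, b) : ZMod 2 × F) + (c, d) ∉ nonZeroDivisors (ZMod 2 × F) ↔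
      a = c ∨ b + d = 0 := by
    rw [Prod.mk_add_mk, mem_nzd_prod]
    simp only [mem_nonZeroDivisors_iff_ne_zero, not_and_or, not_not,
      zmod2_add_eq_zero]
  rw [hnz]
  simp only [Ne, Prod.mk.injEq]
  have h2 : ∀ x : ZMod 2, x = 0 ∨ x = 1 := by decide
  rcases h2 a with ha | ha <;> rcases h2 c with hc | hc <;> subst ha <;> subst hc <;>
    simp +decide [add_eq_zero_iff_eq_neg, neg_eq_iff_eq_neg]
end

section
/- Let R be a finite local commutative ring that is not a field. Then |R| ≤ |Z(R)|². -/
open IsLocalRing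


open SimpleGraph

theorem card_le_sq_card_zeroDivisors_of_finite_local
    (R : Type*) [CommRing R] [Fintype R] [IsLocalRing R] (hF : ¬ IsField R) :
    Fintype.card R ≤ (zeroDivisors R).ncard ^ 2 := by
  show Fintype.card R ≤ (Set.ncard {x : R | x ∉ nonZeroDivisors R}) ^ 2
  classical
  set m := maximalIdeal R
  -- zero divisors = maximal ideal
  have hset : {x : R | x ∉ nonZeroDivisors R} = (m : Set R) := by
    ext x
    show x ∉ nonZeroDivisors R ↔ x ∈ m
    rw [show (x ∈ m) ↔ ¬ IsUnit x from mem_maximalIdeal x, isUnit_iff_mem_nonZeroDivisors_of_finite]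
  rw [hset]
  -- m is nilpotent
  have hart : IsArtinianRing R := inferInstance
  have hnil : IsNilpotent m := by
    rw [show m = Ideal.jacobson ⊥ from (jacobson_eq_maximalIdeal ⊥ bot_ne_top).symm]
    exact IsArtinianRing.isNilpotent_jacobson_bot
  have hmne : m ≠ ⊥ := by
    intro h
    exact hF (IsLocalRing.isField_iff_maximalIdeal_eq.mpr h)
  obtain ⟨n, hn⟩ := hnil
  -- least k with m^k = ⊥
  have hex : ∃ k, m ^ k = ⊥ := ⟨n, hn⟩
  classical
  let k := Nat.find hex
  have hk : m ^ k = ⊥ := Nat.find_spec hex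
  have hk1 : k ≠ 0 := by
    intro h
    have : (⊤ : Ideal R) = ⊥ := by simpa [h] using hk
    exact absurd (this ▸ Submodule.mem_top : (1:R) ∈ (⊥ : Ideal R)) (by simp)
  have hkne1 : k ≠ 1 := fun h => hmne (by simpa [h] using hk)
  have hk2 : 1 < k := lt_of_le_of_ne (Nat.one_le_iff_ne_zero.mpr hk1) (Ne.symm hkne1)
  have hprev : m ^ (k - 1) ≠ ⊥ := by
    intro h
    exact Nat.find_min hex (Nat.sub_lt (Nat.pos_of_ne_zero hk1) one_pos) h
  obtain ⟨a, ha, ha0⟩ := Submodule.exists_mem_ne_zero_of_ne_bot hprev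
  have ham : a ∈ m := by
    have : m ^ (k - 1) ≤ m ^ 1 := Ideal.pow_le_pow_right (Nat.le_sub_one_of_lt hk2)
    simpa using this ha
  have hma : ∀ t ∈ m, t * a = 0 := by
    intro t ht
    have : t * a ∈ m ^ k := by
      have : t * a ∈ m * m ^ (k - 1) := Ideal.mul_mem_mul ht ha
      rwa [← pow_succ', Nat.sub_add_cancel (Nat.one_le_iff_ne_zero.mpr hk1)] at this
    rwa [hk, Submodule.mem_bot] at this
  -- injection R ⧸ m → m
  have hcod : ∀ x : R, (LinearMap.toSpanSingleton R R a) x ∈ m := fun x =>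
    m.smul_mem x ham
  let f0 := LinearMap.codRestrict m (LinearMap.toSpanSingleton R R a) hcod
  have hker : m ≤ LinearMap.ker f0 := by
    intro t ht
    simp only [LinearMap.mem_ker, f0]
    ext
    exact hma t ht
  let f := Submodule.liftQ m f0 hker
  have hfinj : Function.Injective f := by
    rw [← LinearMap.ker_eq_bot, Submodule.ker_liftQ_eq_bot]
    intro t ht
    simp only [LinearMap.mem_ker, f0] at ht
    have hta : t * a = 0 := congrArg Subtype.val ht
    by_contra htm
    have : IsUnit t := not_not.mp ((mem_maximalIdeal t).not.mp htm)
    obtain ⟨u, rfl⟩ := this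
    exact ha0 (by simpa using congrArg (fun z => (↑u⁻¹ : R) * z) hta)
  have hcard : Nat.card (R ⧸ m) ≤ Nat.card m := Nat.card_le_card_of_injective f hfinj
  have hmul : Nat.card R = Nat.card (R ⧸ m) * Nat.card m := by
    rw [Submodule.card_eq_card_quotient_mul_card m, mul_comm]
  have : Nat.card R ≤ Nat.card m * Nat.card m := by
    rw [hmul]
    exact Nat.mul_le_mul_right _ hcard
  have hnc : (m : Set R).ncard = Nat.card m :=
    (Nat.card_coe_set_eq _).symm
  rw [← Nat.card_eq_fintype_card, sq, hnc]
  exact this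
end

section
/- The total graph T(Γ(ℤ₂ × ℤ₄)) of the product ring ℤ₂ × ℤ₄ is isomorphic (as a simple graph) to the total graph T(Γ(ℤ₂ × ℤ₂[X]/(X²))), where ℤ₂[X]/(X²) is the ring of dual numbers over ℤ₂. -/
open SimpleGraph

instance myDecEq : DecidableEq (DualNumber (ZMod 2)) :=
  inferInstanceAs (DecidableEq (ZMod 2 × ZMod 2))

instance myFin : Fintype (DualNumber (ZMod 2)) :=
  inferInstanceAs (Fintype (ZMod 2 × ZMod 2))

instance myDecNZD (R : Type*) [CommRing R] [Fintype R] [DecidableEq R] :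
    DecidablePred (· ∈ nonZeroDivisors R) := fun x =>
  decidable_of_iff _ mem_nonZeroDivisors_iff.symm

def f : ZMod 4 → DualNumber (ZMod 2) :=
  fun x => match x.val with
  | 0 => 0
  | 1 => 1
  | 2 => DualNumber.eps
  | _ => 1 + DualNumber.eps

def g : DualNumber (ZMod 2) → ZMod 4 :=
  fun x => match x.1.val, x.2.val with
  | 0, 0 => 0
  | 1, 0 => 1
  | 0, _ => 2
  | _, _ => 3

def myEquiv : (ZMod 2 × ZMod 4) ≃ (ZMod 2 × DualNumber (ZMod 2)) where
  toFun p := (p.1, f p.2)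
  invFun p := (p.1, g p.2)
  left_inv p := Prod.ext rfl (by revert p; decide)
  right_inv p := Prod.ext rfl (by revert p; decide)

instance (R : Type*) [CommRing R] [Fintype R] [DecidableEq R] :
    DecidableRel (totalGraph R).Adj := fun x y =>
  inferInstanceAs (Decidable (x ≠ y ∧ x + y ∉ nonZeroDivisors R))

theorem key : ∀ a b, (totalGraph (ZMod 2 × DualNumber (ZMod 2))).Adj (myEquiv a) (myEquiv b)
    ↔ (totalGraph (ZMod 2 × ZMod 4)).Adj a b := by decide

theorem totalGraph_Z2_prod_Z4_iso_Z2_prod_dualNumbers :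
    Nonempty (totalGraph (ZMod 2 × ZMod 4) ≃g
      totalGraph (ZMod 2 × DualNumber (ZMod 2))) := by
  exact ⟨⟨myEquiv, key _ _⟩⟩
end
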